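/- arXiv:1105.3085 — 3 statements merged into one kernel-verified Lean document; each statement's English description precedes it below -/
import Mathlib

section
/- If ν₁ and ν₂ satisfy the linear relation αH + βH' + γ = 0 (with H = (ν₁+ν₂)/2, H' = (ν₁-ν₂)/2), then the parallel curvatures ν̄ᵢ = ε·νᵢ/(1-a·νᵢ) satisfy ε(α + 2aγ)H̄ + εβH̄' + γ = -a(α + aγ)K̄, where H̄, H̄', K̄ are formed from ν̄₁, ν̄₂. -/
/-! Multiplying through by `(1 - a ν₁)(1 - a ν₂)`, the claimed identity becomes `2ε²` times the
linear relation between `ν₁` and `ν₂`, up to a multiple of `ε² - 1`; and `ε² = 1` because `ε` is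
the sign of a nonzero number. -/

theorem Real.sign_mul_self_of_ne_zero {r : ℝ} (hr : r ≠ 0) : Real.sign r * Real.sign r = 1 := by
  rcases Real.sign_apply_eq_of_ne_zero r hr with h | h <;> rw [h] <;> norm_num

theorem parallel_curvatures_relation {ν₁ ν₂ a α β γ ε : ℝ} (hε : ε * ε = 1)
    (h1 : 1 - a * ν₁ ≠ 0) (h2 : 1 - a * ν₂ ≠ 0)
    (hrel : α * ((ν₁ + ν₂) / 2) + β * ((ν₁ - ν₂) / 2) + γ = 0) :
    ε * (α + 2 * a * γ) * ((ε * ν₁ / (1 - a * ν₁) + ε * ν₂ / (1 - a * ν₂)) / 2)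
      + ε * β * ((ε * ν₁ / (1 - a * ν₁) - ε * ν₂ / (1 - a * ν₂)) / 2) + γ
      = -a * (α + a * γ) * (ε * ν₁ / (1 - a * ν₁) * (ε * ν₂ / (1 - a * ν₂))) := by
  field_simp
  linear_combination (2 * ε * ε) * hrel + (-2 * γ * (1 - a * ν₁) * (1 - a * ν₂)) * hε

theorem parallel_of_linear_W_surface_general
    (ν₁ ν₂ a α β γ ε νb₁ νb₂ Hb Hb' Kb : ℝ)
    (h1 : 1 - a * ν₁ ≠ 0) (h2 : 1 - a * ν₂ ≠ 0)
    (hε : ε = Real.sign ((1 - a * ν₁) * (1 - a * ν₂)))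
    (hrel : α * ((ν₁ + ν₂) / 2) + β * ((ν₁ - ν₂) / 2) + γ = 0)
    (hn1 : νb₁ = ε * ν₁ / (1 - a * ν₁))
    (hn2 : νb₂ = ε * ν₂ / (1 - a * ν₂))
    (hHb : Hb = (νb₁ + νb₂) / 2) (hHb' : Hb' = (νb₁ - νb₂) / 2) (hKb : Kb = νb₁ * νb₂) :
    ε * (α + 2 * a * γ) * Hb + ε * β * Hb' + γ = -a * (α + a * γ) * Kb := by
  have hε_sq : ε * ε = 1 := hε ▸ Real.sign_mul_self_of_ne_zero (mul_ne_zero h1 h2)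
  subst hKb hHb hHb' hn1 hn2
  exact parallel_curvatures_relation hε_sq h1 h2 hrel

/-- If ν₁ and ν₂ satisfy αH + βH' + γ = 0, then the parallel curvatures
νbᵢ = ε·νᵢ/(1-a·νᵢ) satisfy ε(α + 2aγ)Hb + εβHb' + γ = -a(α + aγ)Kb. -/
theorem parallel_of_linear_W_surface
    (ν₁ ν₂ a α β γ ε νb₁ νb₂ Hb Hb' Kb : ℝ) (ha : a ≠ 0)
    (h1 : 1 - a * ν₁ ≠ 0) (h2 : 1 - a * ν₂ ≠ 0)
    (hε : ε = Real.sign ((1 - a * ν₁) * (1 - a * ν₂)))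
    (hrel : α * ((ν₁ + ν₂) / 2) + β * ((ν₁ - ν₂) / 2) + γ = 0)
    (hn1 : νb₁ = ε * ν₁ / (1 - a * ν₁))
    (hn2 : νb₂ = ε * ν₂ / (1 - a * ν₂))
    (hHb : Hb = (νb₁ + νb₂) / 2) (hHb' : Hb' = (νb₁ - νb₂) / 2) (hKb : Kb = νb₁ * νb₂) :
    ε * (α + 2 * a * γ) * Hb + ε * β * Hb' + γ = -a * (α + a * γ) * Kb :=
  parallel_of_linear_W_surface_general ν₁ ν₂ a α β γ ε νb₁ νb₂ Hb Hb' Kb h1 h2 hε hrel hn1 hn2 hHb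
    hHb' hKb
end

section
/- If ν₁ and ν₂ satisfy K = αH + βH' + γ (with K = ν₁ν₂, H = (ν₁+ν₂)/2, H' = (ν₁-ν₂)/2), then the parallel curvatures ν̄ᵢ = ε·νᵢ/(1-a·νᵢ) satisfy ε(α + 2aγ)H̄ + εβH̄' + γ = (1 - aα - a²γ)K̄. -/
theorem Real.sign_sq_of_ne_zero {r : ℝ} (hr : r ≠ 0) : Real.sign r ^ 2 = 1 := by
  rcases Real.sign_apply_eq_of_ne_zero r hr with h | h <;> simp [h]

/-- After clearing the denominators, every term except `γ (1 - a ν₁) (1 - a ν₂)` carries the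
factor `ε ^ 2`, so the identity is `ε ^ 2` times the cleared relation `hrel`, up to `ε ^ 2 - 1 = 0`. -/
theorem linear_weingarten_relation_parallel {ν₁ ν₂ a α β γ ε : ℝ} (hε : ε ^ 2 = 1)
    (h1 : 1 - a * ν₁ ≠ 0) (h2 : 1 - a * ν₂ ≠ 0)
    (hrel : ν₁ * ν₂ = α * ((ν₁ + ν₂) / 2) + β * ((ν₁ - ν₂) / 2) + γ) :
    ε * (α + 2 * a * γ) * ((ε * ν₁ / (1 - a * ν₁) + ε * ν₂ / (1 - a * ν₂)) / 2)
        + ε * β * ((ε * ν₁ / (1 - a * ν₁) - ε * ν₂ / (1 - a * ν₂)) / 2) + γ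
      = (1 - a * α - a ^ 2 * γ) * (ε * ν₁ / (1 - a * ν₁) * (ε * ν₂ / (1 - a * ν₂))) := by
  field_simp
  linear_combination (-2 * ε ^ 2) * hrel - 2 * γ * (1 - a * ν₁) * (1 - a * ν₂) * hε

theorem parallel_of_linear_fractional_W_surface_general
    (ν₁ ν₂ a α β γ ε νb₁ νb₂ Hb Hb' Kb : ℝ)
    (h1 : 1 - a * ν₁ ≠ 0) (h2 : 1 - a * ν₂ ≠ 0)
    (hε : ε = Real.sign ((1 - a * ν₁) * (1 - a * ν₂)))
    (hrel : ν₁ * ν₂ = α * ((ν₁ + ν₂) / 2) + β * ((ν₁ - ν₂) / 2) + γ)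
    (hn1 : νb₁ = ε * ν₁ / (1 - a * ν₁))
    (hn2 : νb₂ = ε * ν₂ / (1 - a * ν₂))
    (hHb : Hb = (νb₁ + νb₂) / 2) (hHb' : Hb' = (νb₁ - νb₂) / 2) (hKb : Kb = νb₁ * νb₂) :
    ε * (α + 2 * a * γ) * Hb + ε * β * Hb' + γ = (1 - a * α - a ^ 2 * γ) * Kb := by
  have hε_sq : ε ^ 2 = 1 := hε ▸ Real.sign_sq_of_ne_zero (mul_ne_zero h1 h2)
  subst hn1 hn2 hHb hHb' hKb
  exact linear_weingarten_relation_parallel hε_sq h1 h2 hrel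

/-- If ν₁ and ν₂ satisfy K = αH + βH' + γ, then the parallel curvatures
νbᵢ = ε·νᵢ/(1-a·νᵢ) satisfy ε(α + 2aγ)Hb + εβHb' + γ = (1 - aα - a²γ)Kb. -/
theorem parallel_of_linear_fractional_W_surface
    (ν₁ ν₂ a α β γ ε νb₁ νb₂ Hb Hb' Kb : ℝ) (ha : a ≠ 0)
    (h1 : 1 - a * ν₁ ≠ 0) (h2 : 1 - a * ν₂ ≠ 0)
    (hε : ε = Real.sign ((1 - a * ν₁) * (1 - a * ν₂)))
    (hrel : ν₁ * ν₂ = α * ((ν₁ + ν₂) / 2) + β * ((ν₁ - ν₂) / 2) + γ)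
    (hn1 : νb₁ = ε * ν₁ / (1 - a * ν₁))
    (hn2 : νb₂ = ε * ν₂ / (1 - a * ν₂))
    (hHb : Hb = (νb₁ + νb₂) / 2) (hHb' : Hb' = (νb₁ - νb₂) / 2) (hKb : Kb = νb₁ * νb₂) :
    ε * (α + 2 * a * γ) * Hb + ε * β * Hb' + γ = (1 - a * α - a ^ 2 * γ) * Kb :=
  parallel_of_linear_fractional_W_surface_general ν₁ ν₂ a α β γ ε νb₁ νb₂ Hb Hb' Kb h1 h2 hε hrel
    hn1 hn2 hHb hHb' hKb
end

section
/- If f, g : I → ℝ are differentiable with f - g nonvanishing, and f̄ = εf/(1-af), ḡ = εg/(1-ag), then exp(2∫_{ν₀}^{ν} ḡ'/(ḡ - f̄)) = ((1-a·g(ν₀))²/(1-a·g(ν))²)·exp(2∫_{ν₀}^{ν} g'/(g-f)) for all ν ∈ I. -/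
open Set Real MeasureTheory intervalIntegral

/-!
Writing `ḡ - f̄ = ε (g - f) / ((1 - a g)(1 - a f))` and `ḡ' = ε g' / (1 - a g)²`, the integrand
`ḡ' / (ḡ - f̄)` splits as `g' / (g - f) - u' / u` with `u = 1 - a g`. The second term integrates
to `log |u(ν₀)| - log |u(ν)|`, which after doubling and exponentiating is the factor
`(1 - a g(ν₀))² / (1 - a g(ν))²`.
-/

lemma moebius_deriv_div_moebius_sub {ε a x y y' : ℝ} (hε : ε ≠ 0) (hxy : y - x ≠ 0)
    (hx : 1 - a * x ≠ 0) (hy : 1 - a * y ≠ 0) :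
    ε * y' / (1 - a * y) ^ 2 / (ε * y / (1 - a * y) - ε * x / (1 - a * x)) =
      y' / (y - x) - -(a * y') / (1 - a * y) := by
  have hsub : ε * y / (1 - a * y) - ε * x / (1 - a * x) =
      ε * (y - x) / ((1 - a * y) * (1 - a * x)) := by
    rw [div_sub_div _ _ hy hx]
    ring
  rw [hsub]
  field_simp
  ring

lemma exp_integral_div_eq_abs_div {u u' : ℝ → ℝ} {a b : ℝ}
    (hu : ∀ t ∈ uIcc a b, HasDerivAt u (u' t) t) (hu' : ContinuousOn u' (uIcc a b))
    (hu0 : ∀ t ∈ uIcc a b, u t ≠ 0) :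
    exp (∫ t in a..b, u' t / u t) = |u b| / |u a| := by
  have hlog : ∫ t in a..b, u' t / u t = log (u b) - log (u a) :=
    integral_eq_sub_of_hasDerivAt (fun t ht => (hu t ht).log (hu0 t ht))
      (hu'.div (HasDerivAt.continuousOn hu) hu0).intervalIntegrable
  rw [hlog, exp_sub, exp_log_eq_abs (hu0 b right_mem_uIcc),
    exp_log_eq_abs (hu0 a left_mem_uIcc)]

theorem parallel_Weingarten_integrating_factor_general
    (I : Set ℝ) (hconn : Convex ℝ I) (ν₀ : ℝ) (hν₀ : ν₀ ∈ I)
    (f g f' g' : ℝ → ℝ) (a ε : ℝ) (hε : ε = 1 ∨ ε = -1)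
    (hfg : ∀ ν ∈ I, f ν ≠ g ν)
    (h1 : ∀ ν ∈ I, 1 - a * f ν ≠ 0) (h2 : ∀ ν ∈ I, 1 - a * g ν ≠ 0)
    (hf : ∀ ν ∈ I, HasDerivAt f (f' ν) ν) (hg : ∀ ν ∈ I, HasDerivAt g (g' ν) ν)
    (hg' : ContinuousOn g' I) :
    ∀ ν ∈ I,
      Real.exp (2 * ∫ t in ν₀..ν,
          (ε * g' t / (1 - a * g t) ^ 2) /
            (ε * g t / (1 - a * g t) - ε * f t / (1 - a * f t))) =
        ((1 - a * g ν₀) ^ 2 / (1 - a * g ν) ^ 2) *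
          Real.exp (2 * ∫ t in ν₀..ν, g' t / (g t - f t)) := by
  intro ν hν
  have hJ : uIcc ν₀ ν ⊆ I := hconn.ordConnected.uIcc_subset hν₀ hν
  have hε0 : ε ≠ 0 := by rcases hε with rfl | rfl <;> norm_num
  have hgf : ∀ t ∈ uIcc ν₀ ν, g t - f t ≠ 0 := fun t ht => sub_ne_zero.2 (hfg t (hJ ht)).symm
  have hu : ∀ t ∈ uIcc ν₀ ν, HasDerivAt (fun t => 1 - a * g t) (-(a * g' t)) t :=
    fun t ht => ((hg t (hJ ht)).const_mul a).const_sub 1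
  have hu' : ContinuousOn (fun t => -(a * g' t)) (uIcc ν₀ ν) :=
    ((hg'.mono hJ).const_smul a).neg
  have hint₁ : IntervalIntegrable (fun t => g' t / (g t - f t)) volume ν₀ ν :=
    ((hg'.mono hJ).div (((HasDerivAt.continuousOn hg).sub (HasDerivAt.continuousOn hf)).mono hJ)
      hgf).intervalIntegrable
  have hint₂ : IntervalIntegrable (fun t => -(a * g' t) / (1 - a * g t)) volume ν₀ ν :=
    (hu'.div (HasDerivAt.continuousOn hu) fun t ht => h2 t (hJ ht)).intervalIntegrable
  have hfactor : exp (2 * ∫ t in ν₀..ν, -(a * g' t) / (1 - a * g t)) =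
      (1 - a * g ν) ^ 2 / (1 - a * g ν₀) ^ 2 := by
    rw [two_mul, exp_add, ← sq, exp_integral_div_eq_abs_div hu hu' fun t ht => h2 t (hJ ht),
      div_pow, sq_abs, sq_abs]
  rw [integral_congr fun t ht => moebius_deriv_div_moebius_sub hε0 (hgf t ht) (h1 t (hJ ht))
    (h2 t (hJ ht)), integral_sub hint₁ hint₂, mul_sub, exp_sub, hfactor,
    div_div_eq_mul_div, mul_div_assoc, mul_comm]

/-- For C¹ Weingarten functions f, g with f - g nonvanishing and
f̄ = εf/(1-af), ḡ = εg/(1-ag),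
exp(2∫_{ν₀}^{ν} ḡ'/(ḡ - f̄)) = ((1-a·g(ν₀))²/(1-a·g(ν))²)·exp(2∫_{ν₀}^{ν} g'/(g-f)). -/
theorem parallel_Weingarten_integrating_factor
    (I : Set ℝ) (hI : IsOpen I) (hconn : Convex ℝ I) (ν₀ : ℝ) (hν₀ : ν₀ ∈ I)
    (f g f' g' : ℝ → ℝ) (a ε : ℝ) (ha : a ≠ 0) (hε : ε = 1 ∨ ε = -1)
    (hfg : ∀ ν ∈ I, f ν ≠ g ν)
    (h1 : ∀ ν ∈ I, 1 - a * f ν ≠ 0) (h2 : ∀ ν ∈ I, 1 - a * g ν ≠ 0)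
    (hf : ∀ ν ∈ I, HasDerivAt f (f' ν) ν) (hg : ∀ ν ∈ I, HasDerivAt g (g' ν) ν)
    (hf' : ContinuousOn f' I) (hg' : ContinuousOn g' I) :
    ∀ ν ∈ I,
      Real.exp (2 * ∫ t in ν₀..ν,
          (ε * g' t / (1 - a * g t) ^ 2) /
            (ε * g t / (1 - a * g t) - ε * f t / (1 - a * f t))) =
        ((1 - a * g ν₀) ^ 2 / (1 - a * g ν) ^ 2) *
          Real.exp (2 * ∫ t in ν₀..ν, g' t / (g t - f t)) :=
  parallel_Weingarten_integrating_factor_general I hconn ν₀ hν₀ f g f' g' a ε hε hfg h1 h2 hf hg hg'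
end
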